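/- (Energy/flux dissipation identity.) Let f be a bounded weak solution of ω·∇_z f + σ L f = 0 on Z × S^d, smooth enough in z. Then for each x-Fourier mode k ∈ ℤ^d, the function y ↦ ⟨ω_y |f̂(k,y,·)|²⟩ is Lipschitz and satisfies ∂_y⟨ω_y|f̂(k,y,·)|²⟩ + 2σ Re⟨ \overline{f̂(k,y,·)} (L f̂)(k,y,·)⟩ = 0 for y > 0; in particular, by coercivity, ∂_y⟨ω_y|f̂|²⟩(k,y) + 2σμ⟨|f̂ − ⟨f̂⟩|²⟩(k,y) ≤ 0, so y ↦ ⟨ω_y|f̂|²⟩(k,y) is nonincreasing. -/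

import Mathlib

/-!
Multiplying the mode equation by `conj g` and taking real parts kills the skew term
`2πi (k·ω_x) |g|²`, leaving `ω_y ∂_y |g|² = -2σ Re (conj g · L g)` pointwise on the sphere.
Integrating over `S^d` gives the flux identity; differentiation under the integral is justified by
the uniform bounds on `g` and `∂_y g`, and by the finiteness of the `d`-dimensional Hausdorff
measure of `S^d`, which is covered by the radial projections of the `2(d+1)` faces of the cube
`[-1, 1]^{d+1}`, each a `2`-Lipschitz image of `[-1, 1]^d`. Coercivity of `L` bounds the
derivative by `-2σμ₀ ‖g - ⟨g⟩‖² ≤ 0`, and the normalisation of the kernel gives `|L g| ≤ 2C`,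
hence a bounded derivative: the energy flux is Lipschitz and nonincreasing.
-/

open MeasureTheory Metric Set
noncomputable section

/-- `E = ℝ^{d+1}`, ambient space of the sphere of directions `S^d`. -/
abbrev Esp (d : ℕ) := EuclideanSpace ℝ (Fin (d+1))

/-- Surface measure on the unit sphere `S^d ⊂ ℝ^{d+1}`. -/
noncomputable def sphμ (d : ℕ) : Measure (Esp d) := (μH[(d : ℝ)]).restrict (Metric.sphere 0 1)

/-- Vertical component `ω_y` of a direction `ω ∈ S^d`. -/
def wy (d : ℕ) (ω : Esp d) : ℝ := ω (Fin.last d)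

/-- `|B^d|`: Lebesgue measure of the unit ball of `ℝ^d`. -/
def Bvol (d : ℕ) : ℝ := (volume (Metric.ball (0 : EuclideanSpace ℝ (Fin d)) 1)).toReal

/-- `|S^d|`: total surface measure of the sphere. -/
noncomputable def Svol (d : ℕ) : ℝ := ((sphμ d) Set.univ).toReal

/-- Horizontal component `ω_x ∈ ℝ^d` of a direction `ω ∈ S^d`. -/
def wx (d : ℕ) (ω : Esp d) : Fin d → ℝ := fun i => ω i.castSucc

open Filter Topology ComplexConjugate
open scoped InnerProductSpace

section SphereMeasure

variable {n : ℕ}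

lemma lipschitzOnWith_normalize {V : Type*} [NormedAddCommGroup V] [NormedSpace ℝ V] :
    LipschitzOnWith 2 (NormedSpace.normalize : V → V) {x | 1 ≤ ‖x‖} := by
  refine LipschitzOnWith.of_dist_le_mul fun a (ha : 1 ≤ ‖a‖) b (hb : 1 ≤ ‖b‖) => ?_
  have ha0 : 0 < ‖a‖ := one_pos.trans_le ha
  have hb0 : 0 < ‖b‖ := one_pos.trans_le hb
  have hsplit : NormedSpace.normalize a - NormedSpace.normalize b =
      ‖a‖⁻¹ • (a - b) + (‖a‖⁻¹ - ‖b‖⁻¹) • b := by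
    simp only [NormedSpace.normalize]; module
  have h₁ : ‖‖a‖⁻¹ • (a - b)‖ ≤ ‖a - b‖ := by
    rw [norm_smul, norm_inv, norm_norm]
    exact mul_le_of_le_one_left (norm_nonneg _) (inv_le_one_of_one_le₀ ha)
  have h₂ : ‖(‖a‖⁻¹ - ‖b‖⁻¹) • b‖ ≤ ‖a - b‖ := by
    rw [norm_smul, inv_sub_inv ha0.ne' hb0.ne', norm_div, Real.norm_eq_abs, Real.norm_eq_abs,
      abs_of_pos (mul_pos ha0 hb0), div_mul_eq_mul_div, mul_div_mul_right _ _ hb0.ne']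
    exact div_le_of_le_mul₀ ha0.le (norm_nonneg _)
      (by simpa [abs_sub_comm, mul_comm] using
        (abs_norm_sub_norm_le a b).trans (le_mul_of_one_le_left (norm_nonneg _) ha))
  rw [dist_eq_norm, dist_eq_norm, hsplit, NNReal.coe_ofNat, two_mul]
  exact (norm_add_le _ _).trans (add_le_add h₁ h₂)

def euclideanInsertNth (i : Fin (n + 1)) (s : ℝ) (x : EuclideanSpace ℝ (Fin n)) :
    EuclideanSpace ℝ (Fin (n + 1)) :=
  WithLp.toLp 2 (Fin.insertNth i s x.ofLp)

lemma isometry_euclideanInsertNth (i : Fin (n + 1)) (s : ℝ) :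
    Isometry (euclideanInsertNth i s) := by
  refine Isometry.of_dist_eq fun x y => ?_
  simp only [EuclideanSpace.dist_eq, euclideanInsertNth]
  rw [Fin.sum_univ_succAbove _ i]
  simp

lemma abs_le_norm_euclideanInsertNth (i : Fin (n + 1)) (s : ℝ) (x : EuclideanSpace ℝ (Fin n)) :
    |s| ≤ ‖euclideanInsertNth i s x‖ := by
  simpa [euclideanInsertNth] using PiLp.norm_apply_le (euclideanInsertNth i s x) i

lemma lipschitzWith_normalize_euclideanInsertNth {s : ℝ} (hs : 1 ≤ |s|) (i : Fin (n + 1)) :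
    LipschitzWith 2 (NormedSpace.normalize ∘ euclideanInsertNth i s) := by
  have hmaps : MapsTo (euclideanInsertNth i s) univ {z | 1 ≤ ‖z‖} := fun x _ =>
    hs.trans (abs_le_norm_euclideanInsertNth i s x)
  simpa using lipschitzOnWith_univ.1
    (lipschitzOnWith_normalize.comp
      (isometry_euclideanInsertNth i s).lipschitz.lipschitzOnWith hmaps)

def euclideanCube (n : ℕ) : Set (EuclideanSpace ℝ (Fin n)) :=
  WithLp.toLp 2 '' univ.pi fun _ => Icc (-1) 1

lemma isCompact_euclideanCube : IsCompact (euclideanCube n) :=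
  (isCompact_univ_pi fun _ => isCompact_Icc).image (PiLp.continuous_toLp 2 _)

lemma sphere_subset_iUnion_normalize_euclideanInsertNth :
    sphere (0 : EuclideanSpace ℝ (Fin (n + 1))) 1 ⊆
      ⋃ i, ⋃ s ∈ ({-1, 1} : Finset ℝ),
        NormedSpace.normalize ∘ euclideanInsertNth i s '' euclideanCube n := by
  intro ω hω
  have hω1 : ‖ω‖ = 1 := by simpa using hω
  obtain ⟨i, -, hmax⟩ :=
    Finset.exists_max_image Finset.univ (fun j => |ω j|) Finset.univ_nonempty
  set c := |ω i|
  have hc : 0 < c := by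
    refine (abs_nonneg _).lt_of_ne' fun hc => ?_
    have : ω = 0 := by
      ext j
      exact abs_nonpos_iff.1 (hc ▸ hmax j (Finset.mem_univ j))
    simp [this] at hω1
  have hs : |ω i / c| = 1 := by rw [abs_div, abs_of_pos hc, div_self hc.ne']
  simp only [mem_iUnion]
  refine ⟨i, ω i / c, ?_, ?_⟩
  · rcases (abs_eq zero_le_one).1 hs with h | h <;> simp [h]
  refine ⟨WithLp.toLp 2 fun j => ω (i.succAbove j) / c, ⟨_, fun j _ => ?_, rfl⟩, ?_⟩
  · rw [mem_Icc, ← abs_le, abs_div, abs_of_pos hc]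
    exact div_le_one_of_le₀ (hmax _ (Finset.mem_univ _)) hc.le
  · have : euclideanInsertNth i (ω i / c) (WithLp.toLp 2 fun j => ω (i.succAbove j) / c)
        = c⁻¹ • ω := by
      ext j
      rcases Fin.eq_self_or_eq_succAbove i j with rfl | ⟨j, rfl⟩ <;>
        simp [euclideanInsertNth, div_eq_inv_mul]
    rw [Function.comp_apply, this, NormedSpace.normalize_smul_of_pos (inv_pos.2 hc),
      NormedSpace.normalize_eq_self_of_norm_eq_one hω1]

lemma hausdorffMeasure_sphere_lt_top :
    μH[(n : ℝ)] (sphere (0 : EuclideanSpace ℝ (Fin (n + 1))) 1) < ⊤ := by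
  have hcube : μH[(n : ℝ)] (euclideanCube n) < ⊤ := isCompact_euclideanCube.measure_lt_top
  refine (measure_mono sphere_subset_iUnion_normalize_euclideanInsertNth).trans_lt ?_
  refine (measure_iUnion_fintype_le _ _).trans_lt (ENNReal.sum_lt_top.2 fun i _ => ?_)
  refine (measure_biUnion_finset_le _ _).trans_lt (ENNReal.sum_lt_top.2 fun s hs => ?_)
  have hs : 1 ≤ |s| := by
    rcases Finset.mem_insert.1 hs with rfl | hs <;> simp_all
  exact ((lipschitzWith_normalize_euclideanInsertNth hs i).hausdorffMeasure_image_le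
    n.cast_nonneg _).trans_lt (ENNReal.mul_lt_top (by simp) hcube)

end SphereMeasure

section EnergyIdentity

variable {α : Type*} [MeasurableSpace α] {ν : Measure α}

lemma mul_inner_eq_of_skew_transport {w σ : ℝ} {c g g' L : ℂ} (hc : c.re = 0)
    (h : (w : ℂ) * g' + c * g + σ * L = 0) :
    w * ⟪g, g'⟫_ℝ = -σ * ⟪g, L⟫_ℝ := by
  have hre := congrArg (fun z => (z * conj g).re) h
  have hgg : (c * (g * conj g)).re = 0 := by
    rw [Complex.mul_conj, Complex.re_mul_ofReal, hc, zero_mul]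
  simp only [add_mul, Complex.add_re, mul_assoc, hgg, Complex.re_ofReal_mul, zero_mul,
    Complex.zero_re] at hre
  rw [Complex.inner, Complex.inner]
  linarith

theorem hasDerivAt_integral_mul_norm_sq {E : Type*} [NormedAddCommGroup E]
    [InnerProductSpace ℝ E] [IsFiniteMeasure ν] {w : α → ℝ} {g g' : ℝ → α → E}
    {B C y : ℝ} {U : Set ℝ} (hU : U ∈ 𝓝 y)
    (hw : AEStronglyMeasurable w ν) (hwB : ∀ᵐ ω ∂ν, |w ω| ≤ B)
    (hg : ∀ s, AEStronglyMeasurable (g s) ν) (hg' : AEStronglyMeasurable (g' y) ν)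
    (hgC : ∀ s ω, ‖g s ω‖ ≤ C) (hg'C : ∀ s ω, ‖g' s ω‖ ≤ C)
    (hderiv : ∀ᵐ ω ∂ν, ∀ s ∈ U, HasDerivAt (g · ω) (g' s ω) s) :
    HasDerivAt (fun s => ∫ ω, w ω * ‖g s ω‖ ^ 2 ∂ν)
      (∫ ω, w ω * (2 * ⟪g y ω, g' y ω⟫_ℝ) ∂ν) y := by
  have hmeas : ∀ s, AEStronglyMeasurable (fun ω => w ω * ‖g s ω‖ ^ 2) ν :=
    fun s => hw.mul ((hg s).norm.pow 2)
  refine (hasDerivAt_integral_of_dominated_loc_of_deriv_le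
    (F' := fun s ω => w ω * (2 * ⟪g s ω, g' s ω⟫_ℝ)) (bound := fun _ => B * (2 * (C * C)))
    hU (Eventually.of_forall hmeas) ?_
    (hw.mul (aestronglyMeasurable_const.mul ((hg y).inner hg'))) ?_ (integrable_const _) ?_).2
  · refine Integrable.of_bound (hmeas y) (B * C ^ 2) ?_
    filter_upwards [hwB] with ω hω
    rw [norm_mul, norm_pow, norm_norm, Real.norm_eq_abs]
    exact mul_le_mul hω (pow_le_pow_left₀ (norm_nonneg _) (hgC y ω) 2) (by positivity)
      ((abs_nonneg _).trans hω)
  · filter_upwards [hwB] with ω hω s _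
    rw [norm_mul, Real.norm_eq_abs, norm_mul, Real.norm_two]
    have hC : 0 ≤ C := (norm_nonneg _).trans (hgC s ω)
    refine mul_le_mul hω (mul_le_mul_of_nonneg_left ?_ zero_le_two) (by positivity)
      ((abs_nonneg _).trans hω)
    exact (norm_inner_le_norm _ _).trans (mul_le_mul (hgC s ω) (hg'C s ω) (norm_nonneg _) hC)
  · filter_upwards [hderiv] with ω hω s hs
    exact (hω s hs).norm_sq.const_mul (w ω)

theorem hasDerivAt_integral_mul_norm_sq_of_skew_transport [IsFiniteMeasure ν] {w : α → ℝ}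
    {c L : α → ℂ} {g g' : ℝ → α → ℂ} {σ B C y : ℝ} {U : Set ℝ} (hU : U ∈ 𝓝 y)
    (hw : AEStronglyMeasurable w ν) (hwB : ∀ᵐ ω ∂ν, |w ω| ≤ B)
    (hg : ∀ s, AEStronglyMeasurable (g s) ν) (hg' : AEStronglyMeasurable (g' y) ν)
    (hgC : ∀ s ω, ‖g s ω‖ ≤ C) (hg'C : ∀ s ω, ‖g' s ω‖ ≤ C)
    (hderiv : ∀ᵐ ω ∂ν, ∀ s ∈ U, HasDerivAt (g · ω) (g' s ω) s)
    (hc : ∀ᵐ ω ∂ν, (c ω).re = 0) (hL : Integrable (fun ω => conj (g y ω) * L ω) ν)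
    (heq : ∀ᵐ ω ∂ν, (w ω : ℂ) * g' y ω + c ω * g y ω + σ * L ω = 0) :
    HasDerivAt (fun s => ∫ ω, w ω * ‖g s ω‖ ^ 2 ∂ν)
      (-2 * σ * (∫ ω, conj (g y ω) * L ω ∂ν).re) y := by
  convert hasDerivAt_integral_mul_norm_sq hU hw hwB hg hg' hgC hg'C hderiv using 1
  rw [← RCLike.re_to_complex, ← integral_re hL, ← integral_const_mul]
  refine integral_congr_ae ?_
  filter_upwards [hc, heq] with ω hcω hω
  have := mul_inner_eq_of_skew_transport hcω hω
  rw [Complex.inner, Complex.inner, mul_comm (L ω)] at this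
  rw [Complex.inner, RCLike.re_to_complex]
  linarith

end EnergyIdentity

section Scattering

variable {α : Type*} [MeasurableSpace α] {ν : Measure α}

def scatteringOp (ν : Measure α) (p : α → α → ℝ) (u : α → ℂ) (ω : α) : ℂ :=
  ∫ ω', (p ω ω' : ℂ) * (u ω - u ω') ∂ν

lemma stronglyMeasurable_scatteringOp [SFinite ν] {p : α → α → ℝ}
    (hp : Measurable (Function.uncurry p)) {u : α → ℂ} (hu : Measurable u) :
    StronglyMeasurable (scatteringOp ν p u) :=
  StronglyMeasurable.integral_prod_right (f := fun ω ω' => (p ω ω' : ℂ) * (u ω - u ω'))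
    ((Complex.measurable_ofReal.comp hp).mul
      ((hu.comp measurable_fst).sub (hu.comp measurable_snd))).stronglyMeasurable

lemma norm_scatteringOp_le {p : α → α → ℝ} {u : α → ℂ} {C : ℝ} {ω : α}
    (hp0 : ∀ᵐ ω' ∂ν, 0 ≤ p ω ω') (hp1 : ∫ ω', p ω ω' ∂ν = 1) (hu : ∀ ω, ‖u ω‖ ≤ C) :
    ‖scatteringOp ν p u ω‖ ≤ 2 * C := by
  have hint : Integrable (p ω) ν := by
    by_contra h
    simp [integral_undef h] at hp1
  calc ‖scatteringOp ν p u ω‖ ≤ ∫ ω', p ω ω' * (2 * C) ∂ν := by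
        refine norm_integral_le_of_norm_le (hint.mul_const _) ?_
        filter_upwards [hp0] with ω' hω'
        rw [norm_mul, Complex.norm_real, Real.norm_of_nonneg hω', two_mul]
        exact mul_le_mul_of_nonneg_left
          ((norm_sub_le _ _).trans (add_le_add (hu ω) (hu ω'))) hω'
    _ = 2 * C := by rw [integral_mul_const, hp1, one_mul]

lemma ae_norm_conj_mul_scatteringOp_le {p : α → α → ℝ} {u : α → ℂ} {C : ℝ}
    (hp0 : ∀ᵐ ω ∂ν, ∀ᵐ ω' ∂ν, 0 ≤ p ω ω') (hp1 : ∀ᵐ ω ∂ν, ∫ ω', p ω ω' ∂ν = 1)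
    (hu : ∀ ω, ‖u ω‖ ≤ C) :
    ∀ᵐ ω ∂ν, ‖conj (u ω) * scatteringOp ν p u ω‖ ≤ 2 * C ^ 2 := by
  filter_upwards [hp0, hp1] with ω hω0 hω1
  rw [norm_mul, RCLike.norm_conj, sq, mul_left_comm]
  exact mul_le_mul (hu ω) (norm_scatteringOp_le hω0 hω1 hu) (norm_nonneg _)
    ((norm_nonneg _).trans (hu ω))

variable [IsFiniteMeasure ν] {p : α → α → ℝ} {u : α → ℂ} {C : ℝ}

lemma integrable_conj_mul_scatteringOp (hp : Measurable (Function.uncurry p))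
    (hp0 : ∀ᵐ ω ∂ν, ∀ᵐ ω' ∂ν, 0 ≤ p ω ω') (hp1 : ∀ᵐ ω ∂ν, ∫ ω', p ω ω' ∂ν = 1)
    (hum : Measurable u) (hu : ∀ ω, ‖u ω‖ ≤ C) :
    Integrable (fun ω => conj (u ω) * scatteringOp ν p u ω) ν :=
  .of_bound ((Complex.continuous_conj.measurable.comp hum).aestronglyMeasurable.mul
    (stronglyMeasurable_scatteringOp hp hum).aestronglyMeasurable) _
    (ae_norm_conj_mul_scatteringOp_le hp0 hp1 hu)

lemma abs_re_integral_conj_mul_scatteringOp_le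
    (hp0 : ∀ᵐ ω ∂ν, ∀ᵐ ω' ∂ν, 0 ≤ p ω ω') (hp1 : ∀ᵐ ω ∂ν, ∫ ω', p ω ω' ∂ν = 1)
    (hu : ∀ ω, ‖u ω‖ ≤ C) :
    |(∫ ω, conj (u ω) * scatteringOp ν p u ω ∂ν).re| ≤ 2 * C ^ 2 * ν.real univ :=
  (Complex.abs_re_le_norm _).trans
    (norm_integral_le_of_norm_le_const (ae_norm_conj_mul_scatteringOp_le hp0 hp1 hu))

end Scattering

section Sphere

variable {d : ℕ}

instance : IsFiniteMeasure (sphμ d) :=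
  ⟨by simpa [sphμ] using hausdorffMeasure_sphere_lt_top⟩

lemma ae_mem_sphere_sphμ : ∀ᵐ ω ∂sphμ d, ω ∈ sphere (0 : Esp d) 1 :=
  ae_restrict_mem isClosed_sphere.measurableSet

lemma ae_abs_wy_le_one : ∀ᵐ ω ∂sphμ d, |wy d ω| ≤ 1 := by
  filter_upwards [ae_mem_sphere_sphμ] with ω hω
  simpa [wy, mem_sphere_zero_iff_norm.1 hω] using PiLp.norm_apply_le ω (Fin.last d)

lemma continuous_wy : Continuous (wy d) := (PiLp.continuous_apply 2 _ (Fin.last d))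

end Sphere

theorem coercive_energy_balance {Φ R N : ℝ → ℝ} {s : Set ℝ} {σ μ₀ S K : ℝ} (hs : Convex ℝ s)
    (hσ : 0 ≤ σ) (hμ₀ : 0 ≤ μ₀) (hS : 0 ≤ S) (hK : 0 ≤ K)
    (hΦ : ∀ y ∈ s, HasDerivAt Φ (-2 * σ * S⁻¹ * R y) y)
    (hcoer : ∀ y, μ₀ * N y ≤ R y / S) (hN : ∀ y, 0 ≤ N y) (hRK : ∀ y, |R y| ≤ K * S) :
    (∀ y, -2 * σ * S⁻¹ * R y + 2 * σ * μ₀ * N y ≤ 0) ∧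
      (∃ Λ : NNReal, LipschitzOnWith Λ Φ s) ∧ AntitoneOn Φ s := by
  have hdiss : ∀ y, -2 * σ * S⁻¹ * R y + 2 * σ * μ₀ * N y ≤ 0 := fun y => by
    calc _ ≤ -2 * σ * S⁻¹ * R y + 2 * σ * (R y / S) := by
          rw [mul_assoc (2 * σ)]; gcongr; exact hcoer y
      _ = 0 := by ring
  have hbound : ∀ y, ‖-2 * σ * S⁻¹ * R y‖₊ ≤ (2 * σ * K).toNNReal := fun y => by
    rw [Real.le_toNNReal_iff_coe_le (by positivity), coe_nnnorm, Real.norm_eq_abs]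
    rcases hS.eq_or_lt with rfl | hS
    · simpa using by positivity
    · rw [abs_mul, abs_mul, abs_mul, abs_neg, abs_two, abs_of_nonneg hσ, abs_inv, abs_of_pos hS,
        mul_assoc]
      exact mul_le_mul_of_nonneg_left ((inv_mul_le_iff₀ hS).2 (mul_comm K S ▸ hRK y))
        (by positivity)
  refine ⟨hdiss, ⟨_, hs.lipschitzOnWith_of_nnnorm_hasDerivWithin_le
    (fun y hy => (hΦ y hy).hasDerivWithinAt) fun y _ => hbound y⟩, ?_⟩
  refine antitoneOn_of_hasDerivWithinAt_nonpos hs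
    (fun y hy => (hΦ y hy).continuousAt.continuousWithinAt)
    (fun y hy => (hΦ y (interior_subset hy)).hasDerivWithinAt) fun y _ => ?_
  linarith [hdiss y, mul_nonneg (mul_nonneg (mul_nonneg zero_le_two hσ) hμ₀) (hN y)]

theorem stmt15_general (d : ℕ) (p : Esp d → Esp d → ℝ)
    (hmeas : Measurable (Function.uncurry p))
    (hpos : ∀ᵐ w ∂((sphμ d).prod (sphμ d)), 0 < p w.1 w.2)
    (hnorm : ∀ᵐ ω ∂(sphμ d), ∫ ω', p ω ω' ∂(sphμ d) = 1)
    (sig : ℝ) (hsig : 0 < sig) (k : Fin d → ℤ)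
    -- spectral gap (coercivity) of L with constant μ₀ > 0:
    (μ₀ : ℝ) (hμ₀ : 0 < μ₀)
    (hcoer : ∀ φ : Esp d → ℂ, MemLp φ 2 (sphμ d) →
      μ₀ * ∫ ω, ‖φ ω - (∫ ω', φ ω' ∂(sphμ d)) / (Svol d : ℂ)‖^2 ∂(sphμ d)
        ≤ (∫ ω, (starRingEnd ℂ) (φ ω)
              * (∫ ω', (p ω ω' : ℂ) * (φ ω - φ ω') ∂(sphμ d)) ∂(sphμ d)).re / Svol d)
    (g g' : ℝ → Esp d → ℂ) (C : ℝ)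
    (hgc : Continuous fun q : ℝ × Esp d => g q.1 q.2)
    (hg'c : Continuous fun q : ℝ × Esp d => g' q.1 q.2)
    (hb : ∀ y ω, ‖g y ω‖ ≤ C ∧ ‖g' y ω‖ ≤ C)
    -- the Fourier-mode equation `ω_y ∂_y g + 2πi (k·ω_x) g + σ L g = 0`:
    (hode : ∀ y, 0 < y → ∀ ω ∈ Metric.sphere (0 : Esp d) 1,
      HasDerivAt (fun s => g s ω) (g' y ω) y ∧
      (wy d ω : ℂ) * g' y ω
        + 2 * Real.pi * Complex.I * (∑ i, (k i : ℂ) * (wx d ω i : ℂ)) * g y ω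
        + sig * (∫ ω', (p ω ω' : ℂ) * (g y ω - g y ω') ∂(sphμ d)) = 0) :
    (∀ y, 0 < y → HasDerivAt
        (fun s => (Svol d)⁻¹ * ∫ ω, wy d ω * ‖g s ω‖^2 ∂(sphμ d))
        (-2 * sig * (Svol d)⁻¹
          * (∫ ω, (starRingEnd ℂ) (g y ω)
              * (∫ ω', (p ω ω' : ℂ) * (g y ω - g y ω') ∂(sphμ d)) ∂(sphμ d)).re) y) ∧
    (∀ y, 0 < y →
      -2 * sig * (Svol d)⁻¹
          * (∫ ω, (starRingEnd ℂ) (g y ω)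
              * (∫ ω', (p ω ω' : ℂ) * (g y ω - g y ω') ∂(sphμ d)) ∂(sphμ d)).re
        + 2 * sig * μ₀
          * ∫ ω, ‖g y ω - (∫ ω', g y ω' ∂(sphμ d)) / (Svol d : ℂ)‖^2 ∂(sphμ d) ≤ 0) ∧
    (∃ Λ : NNReal, LipschitzOnWith Λ
        (fun y => (Svol d)⁻¹ * ∫ ω, wy d ω * ‖g y ω‖^2 ∂(sphμ d)) (Set.Ioi 0)) ∧
    AntitoneOn (fun y => (Svol d)⁻¹ * ∫ ω, wy d ω * ‖g y ω‖^2 ∂(sphμ d)) (Set.Ioi 0) := by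
  have hgy : ∀ y, Continuous (g y) := fun y => hgc.comp (Continuous.prodMk_right y)
  have hp0 : ∀ᵐ ω ∂sphμ d, ∀ᵐ ω' ∂sphμ d, 0 ≤ p ω ω' :=
    (Measure.ae_ae_of_ae_prod hpos).mono fun _ h => h.mono fun _ => le_of_lt
  have hderiv : ∀ y, 0 < y → HasDerivAt
      (fun s => (Svol d)⁻¹ * ∫ ω, wy d ω * ‖g s ω‖ ^ 2 ∂(sphμ d))
      (-2 * sig * (Svol d)⁻¹
        * (∫ ω, conj (g y ω) * scatteringOp (sphμ d) p (g y) ω ∂(sphμ d)).re) y := by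
    intro y hy
    have hflux := hasDerivAt_integral_mul_norm_sq_of_skew_transport (Ioi_mem_nhds hy)
      continuous_wy.aestronglyMeasurable ae_abs_wy_le_one (fun s => (hgy s).aestronglyMeasurable)
      (hg'c.comp (Continuous.prodMk_right y)).aestronglyMeasurable (fun s ω => (hb s ω).1)
      (fun s ω => (hb s ω).2)
      (by filter_upwards [ae_mem_sphere_sphμ] with ω hω s hs using (hode s hs ω hω).1)
      (c := fun ω => 2 * Real.pi * Complex.I * ∑ i, (k i : ℂ) * (wx d ω i : ℂ))
      (ae_of_all _ fun ω => by simp)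
      (integrable_conj_mul_scatteringOp hmeas hp0 hnorm (hgy y).measurable fun ω => (hb y ω).1)
      (by filter_upwards [ae_mem_sphere_sphμ] with ω hω using (hode y hy ω hω).2)
    exact (hflux.const_mul (Svol d)⁻¹).congr_deriv (by ring)
  obtain ⟨hdiss, hlip, hanti⟩ := coercive_energy_balance (convex_Ioi 0) hsig.le hμ₀.le
    ENNReal.toReal_nonneg (by positivity : (0 : ℝ) ≤ 2 * C ^ 2) hderiv
    (fun y => hcoer (g y) (MemLp.of_bound (hgy y).aestronglyMeasurable C
      (ae_of_all _ fun ω => (hb y ω).1)))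
    (fun y => integral_nonneg fun ω => by positivity)
    (fun y => abs_re_integral_conj_mul_scatteringOp_le hp0 hnorm fun ω => (hb y ω).1)
  exact ⟨hderiv, fun y _ => hdiss y, hlip, hanti⟩

/-- energy/flux dissipation identity for a single `x`-Fourier mode `k`:
if `g(y,·)` satisfies `ω_y ∂_y g + 2πi(k·ω_x) g + σ L g = 0`, then
`y ↦ ⟨ω_y |g(y,·)|²⟩` is Lipschitz on `(0,∞)`, satisfies
`∂_y ⟨ω_y|g|²⟩ + 2σ Re⟨ḡ Lg⟩ = 0`, and (by the spectral gap `μ₀`)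
`∂_y ⟨ω_y|g|²⟩ + 2σμ₀ ‖g − ⟨g⟩‖² ≤ 0`; in particular it is nonincreasing. -/
theorem stmt15 (d : ℕ) (p : Esp d → Esp d → ℝ)
    (hmeas : Measurable (Function.uncurry p))
    (hsymm : ∀ ω ω', p ω ω' = p ω' ω)
    (hpos : ∀ᵐ w ∂((sphμ d).prod (sphμ d)), 0 < p w.1 w.2)
    (hnorm : ∀ᵐ ω ∂(sphμ d), ∫ ω', p ω ω' ∂(sphμ d) = 1)
    (sig : ℝ) (hsig : 0 < sig) (k : Fin d → ℤ)
    -- spectral gap (coercivity) of L with constant μ₀ > 0: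
    (μ₀ : ℝ) (hμ₀ : 0 < μ₀)
    (hcoer : ∀ φ : Esp d → ℂ, MemLp φ 2 (sphμ d) →
      μ₀ * ∫ ω, ‖φ ω - (∫ ω', φ ω' ∂(sphμ d)) / (Svol d : ℂ)‖^2 ∂(sphμ d)
        ≤ (∫ ω, (starRingEnd ℂ) (φ ω)
              * (∫ ω', (p ω ω' : ℂ) * (φ ω - φ ω') ∂(sphμ d)) ∂(sphμ d)).re / Svol d)
    (g g' : ℝ → Esp d → ℂ) (C : ℝ)
    (hgc : Continuous fun q : ℝ × Esp d => g q.1 q.2)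
    (hg'c : Continuous fun q : ℝ × Esp d => g' q.1 q.2)
    (hb : ∀ y ω, ‖g y ω‖ ≤ C ∧ ‖g' y ω‖ ≤ C)
    -- the Fourier-mode equation `ω_y ∂_y g + 2πi (k·ω_x) g + σ L g = 0`:
    (hode : ∀ y, 0 < y → ∀ ω ∈ Metric.sphere (0 : Esp d) 1,
      HasDerivAt (fun s => g s ω) (g' y ω) y ∧
      (wy d ω : ℂ) * g' y ω
        + 2 * Real.pi * Complex.I * (∑ i, (k i : ℂ) * (wx d ω i : ℂ)) * g y ω
        + sig * (∫ ω', (p ω ω' : ℂ) * (g y ω - g y ω') ∂(sphμ d)) = 0) :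
    (∀ y, 0 < y → HasDerivAt
        (fun s => (Svol d)⁻¹ * ∫ ω, wy d ω * ‖g s ω‖^2 ∂(sphμ d))
        (-2 * sig * (Svol d)⁻¹
          * (∫ ω, (starRingEnd ℂ) (g y ω)
              * (∫ ω', (p ω ω' : ℂ) * (g y ω - g y ω') ∂(sphμ d)) ∂(sphμ d)).re) y) ∧
    (∀ y, 0 < y →
      -2 * sig * (Svol d)⁻¹
          * (∫ ω, (starRingEnd ℂ) (g y ω)
              * (∫ ω', (p ω ω' : ℂ) * (g y ω - g y ω') ∂(sphμ d)) ∂(sphμ d)).re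
        + 2 * sig * μ₀
          * ∫ ω, ‖g y ω - (∫ ω', g y ω' ∂(sphμ d)) / (Svol d : ℂ)‖^2 ∂(sphμ d) ≤ 0) ∧
    (∃ Λ : NNReal, LipschitzOnWith Λ
        (fun y => (Svol d)⁻¹ * ∫ ω, wy d ω * ‖g y ω‖^2 ∂(sphμ d)) (Set.Ioi 0)) ∧
    AntitoneOn (fun y => (Svol d)⁻¹ * ∫ ω, wy d ω * ‖g y ω‖^2 ∂(sphμ d)) (Set.Ioi 0) :=
  stmt15_general d p hmeas hpos hnorm sig hsig k μ₀ hμ₀ hcoer g g' C hgc hg'c hb hode
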